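/- Let μ > 0 and let {λ_min(N)}_{N≥0} be a sequence of reals with λ_min(N) ≥ μ for all N and λ_min(N) → ∞. Then the sequence S_N = Σ_{k=1}^{N+1} μ^k ∏_{i=N-k+1}^{N} λ_min(i)^{-1} is bounded, i.e., limsup_{N→∞} S_N < ∞. -/
import Mathlib


open Finset Filter

/-- If `λmin N ≥ μ > 0` and `λmin N → ∞`, then
`S_N = ∑_{k=1}^{N+1} μ^k ∏_{i=N-k+1}^{N} λmin(i)⁻¹` is bounded. -/
theorem geometric_product_sum_bounded (μ : ℝ) (hμ : 0 < μ)
    (lmin : ℕ → ℝ) (hlow : ∀ N, μ ≤ lmin N)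
    (htend : Tendsto lmin atTop atTop) :
    let S : ℕ → ℝ := fun N =>
      ∑ k ∈ Finset.Icc 1 (N+1), μ^k * ∏ i ∈ Finset.Icc (N-k+1) N, (lmin i)⁻¹
    ∃ C : ℝ, ∀ N, S N ≤ C := by
  intro S
  have hlpos : ∀ i, 0 < lmin i := fun i => lt_of_lt_of_le hμ (hlow i)
  obtain ⟨N₀, h2⟩ : ∃ N₀, ∀ i ≥ N₀, 2 * μ ≤ lmin i :=
    (htend.eventually_ge_atTop (2 * μ)).exists_forall_of_atTop
  set M : ℝ := max 1 μ with hM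
  set m : ℕ := N₀ + 1 with hm
  have hMpos : (0:ℝ) < M := lt_of_lt_of_le one_pos (le_max_left _ _)
  -- per-term bound
  have hterm : ∀ N k, 1 ≤ k → k ≤ N + 1 →
      μ^k * ∏ i ∈ Finset.Icc (N-k+1) N, (lmin i)⁻¹ ≤ M * 2^m * (1/2:ℝ)^k := by
    intro N k hk1 hk2
    set I : Finset ℕ := Finset.Icc (N-k+1) N with hI
    have hcard : I.card = N + 1 - (N - k + 1) := by rw [hI, Nat.card_Icc]
    have hcard1 : k - 1 ≤ I.card ∧ I.card ≤ k := by omega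
    -- filter of large indices
    have hfilt : I.card - N₀ ≤ (I.filter (fun i => N₀ ≤ i)).card := by
      have hsub : I.filter (fun i => ¬ N₀ ≤ i) ⊆ Finset.range N₀ := by
        intro i hi
        simp only [Finset.mem_filter, not_le] at hi
        exact Finset.mem_range.mpr hi.2
      have h1 := Finset.card_filter_add_card_filter_not (s := I) (p := fun i => N₀ ≤ i)
      have h2' := Finset.card_le_card hsub
      simp only [Finset.card_range] at h2'
      omega
    have hexp : k - m ≤ (I.filter (fun i => N₀ ≤ i)).card := by omega
    -- step 1: split μ^k
    have hsplit : μ^k = μ^(k - I.card) * μ^(I.card) := by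
      rw [← pow_add]; congr 1; omega
    have hμIC : μ^(k - I.card) ≤ M := by
      have : k - I.card ≤ 1 := by omega
      interval_cases h : (k - I.card)
      · rw [pow_zero]; exact le_max_left 1 μ
      · rw [pow_one]; exact le_max_right 1 μ
    -- step 2: product bound
    have hprod : μ^(I.card) * ∏ i ∈ I, (lmin i)⁻¹ ≤ (1/2:ℝ)^((I.filter (fun i => N₀ ≤ i)).card) := by
      have heq : μ^(I.card) * ∏ i ∈ I, (lmin i)⁻¹ = ∏ i ∈ I, (μ * (lmin i)⁻¹) := by
        rw [Finset.prod_mul_distrib, Finset.prod_const]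
      rw [heq]
      have hle : ∏ i ∈ I, (μ * (lmin i)⁻¹) ≤
          ∏ i ∈ I, (if N₀ ≤ i then (1/2:ℝ) else 1) := by
        apply Finset.prod_le_prod
        · intro i _; exact mul_nonneg hμ.le (inv_nonneg.mpr (hlpos i).le)
        · intro i _
          by_cases hi : N₀ ≤ i
          · simp only [hi, if_true]
            rw [mul_inv_le_iff₀ (hlpos i)]
            have := h2 i hi
            nlinarith
          · simp only [hi, if_false]
            rw [mul_inv_le_iff₀ (hlpos i), one_mul]
            exact hlow i
      refine hle.trans ?_
      rw [Finset.prod_ite, Finset.prod_const, Finset.prod_const, one_pow, mul_one]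
    have hhalf : (1/2:ℝ)^((I.filter (fun i => N₀ ≤ i)).card) ≤ (1/2:ℝ)^(k - m) := by
      apply pow_le_pow_of_le_one (by norm_num) (by norm_num) hexp
    have hpow2 : (1/2:ℝ)^(k - m) ≤ 2^m * (1/2)^k := by
      have h1 : (1/2:ℝ)^k = (1/2)^(k - m) * (1/2)^(min k m) := by
        rw [← pow_add]; congr 1; omega
      have h2' : (1:ℝ) ≤ 2^m * (1/2)^(min k m) := by
        rw [one_div, inv_pow, ← div_eq_mul_inv, le_div_iff₀ (by positivity), one_mul]
        exact pow_le_pow_right₀ one_le_two (min_le_right _ _)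
      have hnn : (0:ℝ) ≤ (1/2:ℝ)^(k - m) := by positivity
      calc (1/2:ℝ)^(k - m) = (1/2)^(k-m) * 1 := by ring
        _ ≤ (1/2)^(k-m) * (2^m * (1/2)^(min k m)) := by
            exact mul_le_mul_of_nonneg_left h2' hnn
        _ = 2^m * ((1/2)^(k-m) * (1/2)^(min k m)) := by ring
        _ = 2^m * (1/2)^k := by rw [← h1]
    calc μ^k * ∏ i ∈ I, (lmin i)⁻¹
        = μ^(k - I.card) * (μ^(I.card) * ∏ i ∈ I, (lmin i)⁻¹) := by rw [hsplit]; ring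
      _ ≤ M * (1/2:ℝ)^(k - m) := by
          apply mul_le_mul hμIC (hprod.trans hhalf) ?_ hMpos.le
          have : (0:ℝ) < μ^(I.card) * ∏ i ∈ I, (lmin i)⁻¹ := by
            apply mul_pos (pow_pos hμ _)
            exact Finset.prod_pos (fun i _ => inv_pos.mpr (hlpos i))
          linarith
      _ ≤ M * (2^m * (1/2)^k) := mul_le_mul_of_nonneg_left hpow2 hMpos.le
      _ = M * 2^m * (1/2)^k := by ring
  -- sum the bound
  refine ⟨M * 2^m * 2, fun N => ?_⟩
  have hsum : S N ≤ ∑ k ∈ Finset.Icc 1 (N+1), M * 2^m * (1/2:ℝ)^k := by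
    apply Finset.sum_le_sum
    intro k hk
    rw [Finset.mem_Icc] at hk
    exact hterm N k hk.1 hk.2
  refine hsum.trans ?_
  rw [← Finset.mul_sum]
  apply mul_le_mul_of_nonneg_left ?_ (by positivity)
  have hsub : Finset.Icc 1 (N+1) ⊆ Finset.range (N+2) := by
    intro i hi; rw [Finset.mem_Icc] at hi; rw [Finset.mem_range]; omega
  calc ∑ k ∈ Finset.Icc 1 (N+1), (1/2:ℝ)^k
      ≤ ∑ k ∈ Finset.range (N+2), (1/2:ℝ)^k := by
        apply Finset.sum_le_sum_of_subset_of_nonneg hsub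
        intro i _ _; positivity
    _ ≤ 2 := by
        rw [geom_sum_eq (by norm_num : (1/2:ℝ) ≠ 1)]
        have h0 : (0:ℝ) ≤ (1/2:ℝ)^(N+2) := by positivity
        rw [div_le_iff_of_neg (by norm_num : (1/2:ℝ) - 1 < 0)]
        linarith
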